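/- Stirling-type lower bound: for every positive natural number n, n! ≥ n^n e^{−n} √(2πn). -/

import Mathlib

theorem stmt7_general (n : ℕ) :
    (n : ℝ) ^ n * Real.exp (-(n : ℝ)) * Real.sqrt (2 * Real.pi * n)
      ≤ (Nat.factorial n : ℝ) := by
  have hexp : Real.exp (-(n : ℝ)) = (Real.exp 1)⁻¹ ^ n := by
    rw [← Real.exp_neg, ← Real.exp_nat_mul, mul_neg_one]
  calc (n : ℝ) ^ n * Real.exp (-(n : ℝ)) * Real.sqrt (2 * Real.pi * n)
      = Real.sqrt (2 * Real.pi * n) * (n / Real.exp 1) ^ n := by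
        rw [hexp, div_eq_mul_inv, mul_pow]; ring
    _ ≤ n.factorial := Stirling.le_factorial_stirling n

/-- Stirling-type lower bound: n! ≥ nⁿ e^(−n) √(2πn) for n ≥ 1. -/
theorem stmt7 (n : ℕ) (hn : 1 ≤ n) :
    (n : ℝ) ^ n * Real.exp (-(n : ℝ)) * Real.sqrt (2 * Real.pi * n)
      ≤ (Nat.factorial n : ℝ) :=
  stmt7_general n
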